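/- arXiv:1911.07089 — 9 statements merged into one kernel-verified Lean document; each statement's English description precedes it below -/
import Mathlib

section
/- For any functions d, e : X × X → [0,∞] and all subsets Y,Z ⊆ X, one has (d∘e)_H(Y,Z) ≤ (d_H ∘ e_H)(Y,Z) ≤ 2·(d∘e)_H(Y,Z), where (d∘e)(x,y) = inf_z (d(x,z)+e(z,y)), (d_H ∘ e_H)(Y,Z) = inf_{W⊆X} (d_H(Y,W) + e_H(W,Z)), and d_H(Y,Z) = sup_{y∈Y} inf_{z∈Z} d(y,z). -/
open ENNReal

/-!
The lower bound is a triangle inequality: a point `w ∈ W` close to `y` and a point `z ∈ Z`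
close to `w` give a path `y → w → z` for `d∘e`. For the upper bound, given `t > (d∘e)_H(Y,Z)`
take `W` to be the set of all intermediate points `w` of paths `y → w → z` from `Y` to `Z` of
`(d + e)`-length below `t`; every `y ∈ Y` reaches some such `w`, and every such `w` reaches `Z`,
both at cost below `t`, so `d_H(Y,W) + e_H(W,Z) ≤ 2t`.
-/

namespace GeneralizedRel

variable {α X : Type*}

noncomputable def relComp (d e : α → α → ℝ≥0∞) (x y : α) : ℝ≥0∞ := ⨅ w, d x w + e w y

noncomputable def hausdorffLift (d : X → X → ℝ≥0∞) (Y Z : Set X) : ℝ≥0∞ := ⨆ y ∈ Y, ⨅ z ∈ Z, d y z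

lemma hausdorffLift_relComp_le_add (d e : X → X → ℝ≥0∞) (Y W Z : Set X) :
    hausdorffLift (relComp d e) Y Z ≤ hausdorffLift d Y W + hausdorffLift e W Z := by
  refine iSup₂_le fun y hy => ?_
  have via_w : ∀ w ∈ W, ⨅ z ∈ Z, relComp d e y z ≤ d y w + hausdorffLift e W Z := by
    intro w hw
    calc ⨅ z ∈ Z, relComp d e y z
        ≤ ⨅ z ∈ Z, d y w + e w z := iInf₂_mono fun z _ => iInf_le _ w
      _ = d y w + ⨅ z ∈ Z, e w z := by simp only [ENNReal.add_iInf]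
      _ ≤ d y w + hausdorffLift e W Z := by
          gcongr
          exact le_iSup₂ (f := fun w (_ : w ∈ W) => ⨅ z ∈ Z, e w z) w hw
  calc ⨅ z ∈ Z, relComp d e y z
      ≤ (⨅ w ∈ W, d y w) + hausdorffLift e W Z := by
        simp only [ENNReal.iInf_add]
        exact le_iInf₂ via_w
    _ ≤ hausdorffLift d Y W + hausdorffLift e W Z := by
        gcongr
        exact le_iSup₂ (f := fun y (_ : y ∈ Y) => ⨅ w ∈ W, d y w) y hy

lemma hausdorffLift_relComp_le_relComp_hausdorffLift (d e : X → X → ℝ≥0∞) (Y Z : Set X) :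
    hausdorffLift (relComp d e) Y Z ≤ relComp (hausdorffLift d) (hausdorffLift e) Y Z :=
  le_iInf fun W => hausdorffLift_relComp_le_add d e Y W Z

def midpointsBelow (d e : X → X → ℝ≥0∞) (Y Z : Set X) (t : ℝ≥0∞) : Set X :=
  {w | ∃ y ∈ Y, ∃ z ∈ Z, d y w + e w z < t}

lemma hausdorffLift_source_midpointsBelow_le {d e : X → X → ℝ≥0∞} {Y Z : Set X} {t : ℝ≥0∞}
    (ht : hausdorffLift (relComp d e) Y Z < t) :
    hausdorffLift d Y (midpointsBelow d e Y Z t) ≤ t := by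
  refine iSup₂_le fun y hy => ?_
  have hy_lt : ⨅ z ∈ Z, relComp d e y z < t :=
    (le_iSup₂ (f := fun y (_ : y ∈ Y) => ⨅ z ∈ Z, relComp d e y z) y hy).trans_lt ht
  simp only [relComp, iInf_lt_iff] at hy_lt
  obtain ⟨z, hz, w, hw⟩ := hy_lt
  exact iInf₂_le_of_le w ⟨y, hy, z, hz, hw⟩ (le_self_add.trans hw.le)

lemma hausdorffLift_midpointsBelow_target_le (d e : X → X → ℝ≥0∞) (Y Z : Set X) (t : ℝ≥0∞) :
    hausdorffLift e (midpointsBelow d e Y Z t) Z ≤ t := by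
  refine iSup₂_le fun w ⟨y, hy, z, hz, hw⟩ => ?_
  exact iInf₂_le_of_le z hz (le_add_self.trans hw.le)

lemma relComp_hausdorffLift_le_two_mul_of_lt {d e : X → X → ℝ≥0∞} {Y Z : Set X} {t : ℝ≥0∞}
    (ht : hausdorffLift (relComp d e) Y Z < t) :
    relComp (hausdorffLift d) (hausdorffLift e) Y Z ≤ 2 * t := by
  calc relComp (hausdorffLift d) (hausdorffLift e) Y Z
      ≤ hausdorffLift d Y (midpointsBelow d e Y Z t)
          + hausdorffLift e (midpointsBelow d e Y Z t) Z := iInf_le _ _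
    _ ≤ t + t := add_le_add (hausdorffLift_source_midpointsBelow_le ht)
        (hausdorffLift_midpointsBelow_target_le d e Y Z t)
    _ = 2 * t := (two_mul t).symm

end GeneralizedRel

lemma ENNReal.le_mul_of_forall_lt_imp_le_mul {a b c : ℝ≥0∞} (hc₀ : c ≠ 0) (hc : c ≠ ∞)
    (h : ∀ t, b < t → a ≤ c * t) : a ≤ c * b := by
  rw [← ENNReal.div_le_iff' hc₀ hc]
  exact le_of_forall_gt_imp_ge_of_dense fun t ht => (ENNReal.div_le_iff' hc₀ hc).2 (h t ht)

open GeneralizedRel in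
/-- `(d∘e)_H ≤ d_H ∘ e_H ≤ 2·(d∘e)_H`, where `∘` on the power set takes infima over
intermediate subsets `W ⊆ X` and `d_H(Y,Z) = ⨆ y ∈ Y, ⨅ z ∈ Z, d y z`. -/
theorem hausdorff_comp {X : Type*} (d e : X → X → ℝ≥0∞) (Y Z : Set X) :
    (⨆ y ∈ Y, ⨅ z ∈ Z, ⨅ w : X, (d y w + e w z)) ≤
      (⨅ W : Set X, (⨆ y ∈ Y, ⨅ w ∈ W, d y w) + (⨆ w ∈ W, ⨅ z ∈ Z, e w z)) ∧
    (⨅ W : Set X, (⨆ y ∈ Y, ⨅ w ∈ W, d y w) + (⨆ w ∈ W, ⨅ z ∈ Z, e w z)) ≤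
      2 * (⨆ y ∈ Y, ⨅ z ∈ Z, ⨅ w : X, (d y w + e w z)) := by
  show hausdorffLift (relComp d e) Y Z ≤ relComp (hausdorffLift d) (hausdorffLift e) Y Z ∧
    relComp (hausdorffLift d) (hausdorffLift e) Y Z ≤ 2 * hausdorffLift (relComp d e) Y Z
  exact ⟨hausdorffLift_relComp_le_relComp_hausdorffLift d e Y Z,
    ENNReal.le_mul_of_forall_lt_imp_le_mul two_ne_zero ofNat_ne_top
      fun _ ht => relComp_hausdorffLift_le_two_mul_of_lt ht⟩
end

section
/- For any functions d, e : X × X → [0,∞] and all subsets Y,Z ⊆ X, the reverse-Hausdorff composition satisfies (d^H ∘ e^H)(Y,Z) = (d^H ∘ e_H)(Y,Z), where the compositions take infima over intermediate subsets W ⊆ X, d^H(Y,Z) = inf_{z∈Z} sup_{y∈Y} d(y,z) and d_H(Y,Z) = sup_{y∈Y} inf_{z∈Z} d(y,z). -/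
open ENNReal Filter Set

/-!
Since the Hausdorff distance never exceeds the reverse one, the right-hand side is the smaller.
Conversely, an intermediate set `W` can be replaced by its best singleton `{w}`, for which both
distances from `{w}` to `Z` equal `⨅ z ∈ Z, e w z`; bounding that by its supremum over `W` gives
the other inequality.
-/

theorem ENNReal.iInf₂_add_le_iInf₂_add_iSup₂ {ι : Type*} (s : Set ι) (f g : ι → ℝ≥0∞) :
    ⨅ i ∈ s, (f i + g i) ≤ (⨅ i ∈ s, f i) + ⨆ i ∈ s, g i := by
  rw [iInf_subtype', iInf_subtype', ENNReal.iInf_add]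
  exact iInf_mono fun i => add_le_add_right (le_biSup g i.2) _

noncomputable section

namespace Hausdorff

variable {X : Type*}

def revHausdorff (d : X → X → ℝ≥0∞) (Y Z : Set X) : ℝ≥0∞ := ⨅ z ∈ Z, ⨆ y ∈ Y, d y z

def hausdorff (d : X → X → ℝ≥0∞) (Y Z : Set X) : ℝ≥0∞ := ⨆ y ∈ Y, ⨅ z ∈ Z, d y z

def infComp (A B : Set X → Set X → ℝ≥0∞) (Y Z : Set X) : ℝ≥0∞ := ⨅ W, A Y W + B W Z

theorem hausdorff_le_revHausdorff (d : X → X → ℝ≥0∞) (Y Z : Set X) :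
    hausdorff d Y Z ≤ revHausdorff d Y Z :=
  iSup₂_iInf₂_le_iInf₂_iSup₂ Z Y fun z y => d y z

@[simp]
theorem revHausdorff_singleton_right (d : X → X → ℝ≥0∞) (Y : Set X) (z : X) :
    revHausdorff d Y {z} = ⨆ y ∈ Y, d y z := by
  simp [revHausdorff]

@[simp]
theorem revHausdorff_singleton_left (d : X → X → ℝ≥0∞) (y : X) (Z : Set X) :
    revHausdorff d {y} Z = ⨅ z ∈ Z, d y z := by
  simp [revHausdorff]

theorem infComp_le_iInf₂_add (A B : Set X → Set X → ℝ≥0∞) (Y Z W : Set X) :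
    infComp A B Y Z ≤ ⨅ w ∈ W, (A Y {w} + B {w} Z) :=
  le_iInf₂ fun w _ => iInf_le _ {w}

theorem infComp_revHausdorff_revHausdorff (d e : X → X → ℝ≥0∞) (Y Z : Set X) :
    infComp (revHausdorff d) (revHausdorff e) Y Z =
      infComp (revHausdorff d) (hausdorff e) Y Z := by
  refine le_antisymm (le_iInf fun W => ?_) (iInf_mono fun W => ?_)
  · calc infComp (revHausdorff d) (revHausdorff e) Y Z
        ≤ ⨅ w ∈ W, ((⨆ y ∈ Y, d y w) + ⨅ z ∈ Z, e w z) := by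
          simpa using infComp_le_iInf₂_add (revHausdorff d) (revHausdorff e) Y Z W
      _ ≤ revHausdorff d Y W + hausdorff e W Z := ENNReal.iInf₂_add_le_iInf₂_add_iSup₂ W _ _
  · exact add_le_add_right (hausdorff_le_revHausdorff e W Z) _

end Hausdorff

end

/-- `d^H ∘ e^H = d^H ∘ e_H`, where compositions take infima over intermediate subsets. -/
theorem revHausdorff_comp {X : Type*} (d e : X → X → ℝ≥0∞) (Y Z : Set X) :
    (⨅ W : Set X, (⨅ w ∈ W, ⨆ y ∈ Y, d y w) + (⨅ z ∈ Z, ⨆ w ∈ W, e w z)) =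
    (⨅ W : Set X, (⨅ w ∈ W, ⨆ y ∈ Y, d y w) + (⨆ w ∈ W, ⨅ z ∈ Z, e w z)) :=
  Hausdorff.infComp_revHausdorff_revHausdorff d e Y Z
end

section
/- If d is a distance on X, then the power set P(X) is d_H-sup-complete: for every family 𝒴 of subsets of X that is d_H-final (inf_{Y∈𝒴} d_H(Z,Y) = 0 for all Z ∈ 𝒴), the union ⋃𝒴 satisfies d_H(Z, ⋃𝒴) = 0 for all Z ∈ 𝒴 and d_H(⋃𝒴, W) ≤ sup_{Y∈𝒴} d_H(Y,W) for all subsets W ⊆ X. -/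
open ENNReal Filter Set

section HausdorffExcess

variable {X α : Type*} [CompleteLattice α] (d : X → X → α)

def hausdorffExcess (Z Y : Set X) : α := ⨆ z ∈ Z, ⨅ y ∈ Y, d z y

theorem hausdorffExcess_anti_right (Z : Set X) {Y Y' : Set X} (hYY' : Y ⊆ Y') :
    hausdorffExcess d Z Y' ≤ hausdorffExcess d Z Y :=
  iSup₂_mono fun _ _ => biInf_mono hYY'

theorem hausdorffExcess_sUnion_right_le_iInf (Z : Set X) (𝒴 : Set (Set X)) :
    hausdorffExcess d Z (⋃₀ 𝒴) ≤ ⨅ Y ∈ 𝒴, hausdorffExcess d Z Y :=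
  le_iInf₂ fun _ hY => hausdorffExcess_anti_right d Z (subset_sUnion_of_mem hY)

theorem hausdorffExcess_sUnion_left (𝒴 : Set (Set X)) (W : Set X) :
    hausdorffExcess d (⋃₀ 𝒴) W = ⨆ Y ∈ 𝒴, hausdorffExcess d Y W :=
  iSup_sUnion 𝒴 _

end HausdorffExcess

theorem hausdorff_supComplete_general {X : Type*} (d : X → X → ℝ≥0∞) (𝒴 : Set (Set X))
    (hfin : ∀ Z ∈ 𝒴, (⨅ Y ∈ 𝒴, ⨆ z ∈ Z, ⨅ y ∈ Y, d z y) = 0) :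
    (∀ Z ∈ 𝒴, (⨆ z ∈ Z, ⨅ y ∈ ⋃₀ 𝒴, d z y) = 0) ∧
    ∀ W : Set X, (⨆ z ∈ ⋃₀ 𝒴, ⨅ w ∈ W, d z w) ≤ ⨆ Y ∈ 𝒴, ⨆ z ∈ Y, ⨅ w ∈ W, d z w :=
  ⟨fun Z hZ => nonpos_iff_eq_zero.mp
      ((hausdorffExcess_sUnion_right_le_iInf d Z 𝒴).trans_eq (hfin Z hZ)),
    fun W => (hausdorffExcess_sUnion_left d 𝒴 W).le⟩

/-- `P(X)` is `d_H`-sup-complete: for any `d_H`-final family `𝒴`, the union `⋃₀ 𝒴`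
is a `d_H`-supremum of `𝒴`. Here `d_H(Z,Y) = ⨆ z ∈ Z, ⨅ y ∈ Y, d z y`. -/
theorem hausdorff_supComplete {X : Type*} (d : X → X → ℝ≥0∞)
    (hd : ∀ x y z, d x z ≤ d x y + d y z) (𝒴 : Set (Set X))
    (hfin : ∀ Z ∈ 𝒴, (⨅ Y ∈ 𝒴, ⨆ z ∈ Z, ⨅ y ∈ Y, d z y) = 0) :
    (∀ Z ∈ 𝒴, (⨆ z ∈ Z, ⨅ y ∈ ⋃₀ 𝒴, d z y) = 0) ∧
    ∀ W : Set X, (⨆ z ∈ ⋃₀ 𝒴, ⨅ w ∈ W, d z w) ≤ ⨆ Y ∈ 𝒴, ⨆ z ∈ Y, ⨅ w ∈ W, d z w :=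
  hausdorff_supComplete_general d 𝒴 hfin
end

section
/- For any functions d, e : X × X → [0,∞], the formal-ball lift satisfies (d∘e)₊ = d₊ ∘ e₊ exactly: for all (x,r),(y,s) ∈ X × [0,∞), inf_{(z,t) ∈ X×[0,∞)} [(d(x,z)−r+t)₊ + (e(z,y)−t+s)₊] = ((d∘e)(x,y) − r + s)₊, where (d∘e)(x,y) = inf_z (d(x,z)+e(z,y)) and r₊ = max(r,0). -/
open ENNReal NNReal

/-! Choosing the intermediate radius `t` optimally turns each term of the infimum into
`(d x z + e z y + s) - r`: with `t = 0` when `r ≤ d x z`, and with `t = r - d x z` otherwise,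
so that the first summand vanishes. The remaining infimum over `z` commutes with `· - r`
because subtracting a finite constant is monotone and continuous on `ℝ≥0∞`. -/

lemma ENNReal.iInf_tsub_const {ι : Sort*} (f : ι → ℝ≥0∞) {c : ℝ≥0∞} (hc : c ≠ ∞) :
    ⨅ i, (f i - c) = (⨅ i, f i) - c :=
  (Monotone.map_iInf_of_continuousAt (continuous_sub_right c).continuousAt
    (fun _ _ h ↦ tsub_le_tsub_right h c) (top_sub hc)).symm

lemma ENNReal.iInf_add_coe_tsub_add_tsub_coe (a b : ℝ≥0∞) (r : ℝ≥0) :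
    ⨅ t : ℝ≥0, ((a + t) - r + (b - t)) = (a + b) - r := by
  refine le_antisymm ?_ (le_iInf fun t ↦ ?_)
  · rcases le_or_gt (r : ℝ≥0∞) a with hra | har
    · refine (iInf_le _ 0).trans_eq ?_
      rw [coe_zero, add_zero, tsub_zero, ENNReal.sub_add_eq_add_sub hra coe_ne_top]
    · have ha : a ≠ ∞ := (har.trans coe_lt_top).ne
      have hat : a + ↑(r - a.toNNReal) = r := by
        rw [coe_sub, coe_toNNReal ha, add_tsub_cancel_of_le har.le]
      refine (iInf_le _ (r - a.toNNReal)).trans_eq ?_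
      rw [hat, tsub_self, zero_add, ← hat, ENNReal.add_sub_add_eq_sub_left ha]
  · calc (a + b) - r ≤ (a + t + (b - t)) - r := by
          rw [add_assoc]
          gcongr
          exact le_add_tsub
      _ ≤ (a + t) - r + (b - t) := add_tsub_le_tsub_add

/-- The formal-ball lift preserves composition exactly: `(d∘e)₊ = d₊ ∘ e₊`.
Here `d₊((x,r),(y,s)) = (d x y + s) - r` in `ℝ≥0∞` (truncated subtraction, which
agrees with `(d(x,y) − r + s)₊`), and `(d∘e)(x,y) = ⨅ z, d x z + e z y`. -/
theorem formalBall_comp {X : Type*} (d e : X → X → ℝ≥0∞) (x y : X) (r s : ℝ≥0) :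
    (⨅ p : X × ℝ≥0, (((d x p.1 + (p.2 : ℝ≥0∞)) - (r : ℝ≥0∞)) +
        ((e p.1 y + (s : ℝ≥0∞)) - (p.2 : ℝ≥0∞)))) =
      ((⨅ z : X, d x z + e z y) + (s : ℝ≥0∞)) - (r : ℝ≥0∞) := by
  rw [iInf_prod, ENNReal.iInf_add, ← ENNReal.iInf_tsub_const _ coe_ne_top]
  refine iInf_congr fun z ↦ ?_
  rw [add_assoc]
  exact ENNReal.iInf_add_coe_tsub_add_tsub_coe (d x z) (e z y + s) r
end

section
/- If d is a distance on X, then d₊ defined on the formal ball space X₊ = X × [0,∞) by d₊((x,r),(y,s)) = (d(x,y) − r + s)₊ is also a distance, i.e., d₊((x,r),(z,t)) ≤ d₊((x,r),(y,s)) + d₊((y,s),(z,t)) for all (x,r),(y,s),(z,t) ∈ X₊. -/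
open ENNReal NNReal Filter Set

/-- If `d` is a distance on `X` then `d₊((x,r),(y,s)) = (d x y + s) - r` is a distance
on the formal ball space `X₊ = X × [0,∞)`. -/
theorem formalBall_triangle {X : Type*} (d : X → X → ℝ≥0∞)
    (hd : ∀ x y z, d x z ≤ d x y + d y z) :
    ∀ p q u : X × ℝ≥0,
      (d p.1 u.1 + (u.2 : ℝ≥0∞)) - (p.2 : ℝ≥0∞) ≤
        ((d p.1 q.1 + (q.2 : ℝ≥0∞)) - (p.2 : ℝ≥0∞)) +
          ((d q.1 u.1 + (u.2 : ℝ≥0∞)) - (q.2 : ℝ≥0∞)) := by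
  rintro ⟨x, r⟩ ⟨y, s⟩ ⟨z, t⟩
  simp only
  have key : (d x y + ↑s + (d y z + ↑t)) - ((r : ℝ≥0∞) + ↑s)
      = d x y + (d y z + ↑t) - ↑r := by
    rw [add_comm (r : ℝ≥0∞) ↑s, ← tsub_tsub]
    congr 1
    rw [show d x y + ↑s + (d y z + ↑t) = (d x y + (d y z + ↑t)) + ↑s by ring,
      ENNReal.add_sub_cancel_right coe_ne_top]
  calc d x z + (t : ℝ≥0∞) - r ≤ d x y + (d y z + ↑t) - ↑r := by
        rw [← add_assoc]; gcongr; exact hd x y z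
    _ = (d x y + ↑s + (d y z + ↑t)) - ((r : ℝ≥0∞) + ↑s) := key.symm
    _ ≤ _ := add_tsub_add_le_tsub_add_tsub
end

section
/- Let d be a hemimetric on X. Then the Smyth way-below-type distance Td defined by Td(x,y) = sup over all d-Cauchy nets (z_λ) with Smyth limit z of (limsup_λ d(x,z_λ) − d(y,z))₊ satisfies d ≤ Td, Td ≤ Td ∘ d, and Td ≤ d ∘ Td; in particular Td is a distance. -/
open ENNReal NNReal Filter Set

/-- A net `z : ι → X` (over a preordered index) is `e`-Cauchy if
`lim_γ sup_{δ ≽ γ} e (z γ) (z δ) = 0`. -/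
def CauchyNet {X : Type} (ι : Type) (instι : Preorder ι) (e : X → X → ℝ≥0∞)
    (z : ι → X) : Prop :=
  letI := instι
  ∀ ε : ℝ≥0∞, 0 < ε → ∃ γ₀, ∀ γ, γ₀ ≤ γ → ∀ δ, γ ≤ δ → e (z γ) (z δ) ≤ ε

/-- `l` is a Smyth limit of the net `z` if `e y (z γ) → e y l` for every `y`. -/
def SmythLim {X : Type} (ι : Type) (instι : Preorder ι) (e : X → X → ℝ≥0∞)
    (z : ι → X) (l : X) : Prop :=
  letI := instι
  ∀ y : X, Filter.Tendsto (fun γ => e y (z γ)) Filter.atTop (nhds (e y l))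

/-- The index preorder is a nonempty directed set. -/
def DirectedIdx (ι : Type) (instι : Preorder ι) : Prop :=
  letI := instι
  Nonempty ι ∧ Directed (· ≤ ·) (id : ι → ι)

/-- The way-below distance `Td(x,y)`: the supremum over all `d`-Cauchy nets `(z_λ)`
with Smyth limit `l` of `(limsup_λ d x (z λ)) - d y l` (truncated subtraction). -/
noncomputable def Td {X : Type} (d : X → X → ℝ≥0∞) (x y : X) : ℝ≥0∞ :=
  sSup { v | ∃ (ι : Type) (instι : Preorder ι), DirectedIdx ι instι ∧
    ∃ (z : ι → X) (l : X), CauchyNet ι instι d z ∧ SmythLim ι instι d z l ∧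
      v = (letI := instι; Filter.limsup (fun γ => d x (z γ)) Filter.atTop) - d y l }

/-! Each inequality is checked net by net. The constant net at `y` gives `d x y ≤ Td d x y`.
For a `d`-Cauchy net `z` with Smyth limit `l`, the bound `Td ≤ Td ∘ d` comes from
`d w l ≤ d w y + d y l`, and `Td ≤ d ∘ Td` from `limsup d x zᵧ ≤ d x w + limsup d w zᵧ`. -/

theorem ENNReal.limsup_le_const_add_limsup {α : Type*} {f : Filter α} {u v : α → ℝ≥0∞}
    {c : ℝ≥0∞} (h : ∀ a, u a ≤ c + v a) : limsup u f ≤ c + limsup v f := by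
  rcases f.eq_or_neBot with rfl | _
  · simp
  calc limsup u f ≤ limsup (fun a => c + v a) f := limsup_le_limsup (.of_forall h)
    _ = c + limsup v f := limsup_const_add f v c (by isBoundedDefault) (by isBoundedDefault)

section

variable {X : Type} {d : X → X → ℝ≥0∞}

theorem cauchyNet_const (href : ∀ x, d x x = 0) (ι : Type) (inst : Preorder ι) [Nonempty ι]
    (y : X) :
    CauchyNet ι inst d (fun _ => y) :=
  fun _ _ => ⟨Classical.arbitrary _, fun _ _ _ _ => by simp [href]⟩

theorem smythLim_const (ι : Type) (inst : Preorder ι) (y : X) :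
    SmythLim ι inst d (fun _ => y) y :=
  fun _ => tendsto_const_nhds

theorem limsup_sub_le_Td {ι : Type} [inst : Preorder ι] (hι : DirectedIdx ι inst) {z : ι → X}
    {l : X} (hc : CauchyNet ι inst d z) (hs : SmythLim ι inst d z l) (x y : X) :
    limsup (fun γ => d x (z γ)) atTop - d y l ≤ Td d x y :=
  le_sSup ⟨ι, inst, hι, z, l, hc, hs, rfl⟩

theorem Td_le_of_forall {x y : X} {c : ℝ≥0∞}
    (h : ∀ (ι : Type) [inst : Preorder ι], DirectedIdx ι inst → ∀ (z : ι → X) (l : X),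
      CauchyNet ι inst d z → SmythLim ι inst d z l →
        limsup (fun γ => d x (z γ)) atTop - d y l ≤ c) :
    Td d x y ≤ c :=
  sSup_le fun _ ⟨ι, _, hι, z, l, hc, hs, hv⟩ => hv ▸ h ι hι z l hc hs

theorem le_Td (href : ∀ x, d x x = 0) (x y : X) : d x y ≤ Td d x y := by
  have hι : DirectedIdx ℕ inferInstance := ⟨inferInstance, directed_id⟩
  simpa [href y] using
    limsup_sub_le_Td hι (cauchyNet_const href ℕ _ y) (smythLim_const ℕ _ y) x y

theorem Td_le_Td_add (htri : ∀ x y z, d x z ≤ d x y + d y z) (x y w : X) :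
    Td d x y ≤ Td d x w + d w y :=
  Td_le_of_forall fun _ _ hι z l hc hs =>
    calc limsup (fun γ => d x (z γ)) atTop - d y l
        ≤ (limsup (fun γ => d x (z γ)) atTop - d w l) + (d w l - d y l) := tsub_le_tsub_add_tsub
      _ ≤ Td d x w + d w y :=
        add_le_add (limsup_sub_le_Td hι hc hs x w) (tsub_le_iff_right.2 (htri w y l))

theorem Td_le_add_Td (htri : ∀ x y z, d x z ≤ d x y + d y z) (x y w : X) :
    Td d x y ≤ d x w + Td d w y :=
  Td_le_of_forall fun _ _ hι z l hc hs =>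
    calc limsup (fun γ => d x (z γ)) atTop - d y l
        ≤ (d x w + limsup (fun γ => d w (z γ)) atTop) - d y l :=
          tsub_le_tsub_right (ENNReal.limsup_le_const_add_limsup fun γ => htri x w (z γ)) _
      _ ≤ d x w + (limsup (fun γ => d w (z γ)) atTop - d y l) := add_tsub_le_assoc
      _ ≤ d x w + Td d w y := add_le_add le_rfl (limsup_sub_le_Td hι hc hs w y)

end

/-- For a hemimetric `d`, the Smyth way-below distance `Td` satisfies
`d ≤ Td`, `Td ≤ Td ∘ d` and `Td ≤ d ∘ Td`; in particular `Td` is a distance. -/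
theorem Td_props {X : Type} (d : X → X → ℝ≥0∞)
    (href : ∀ x, d x x = 0) (htri : ∀ x y z, d x z ≤ d x y + d y z) :
    (∀ x y, d x y ≤ Td d x y) ∧
    (∀ x y w, Td d x y ≤ Td d x w + d w y) ∧
    (∀ x y w, Td d x y ≤ d x w + Td d w y) :=
  ⟨le_Td href, Td_le_Td_add htri, Td_le_add_Td htri⟩
end

section
/- Let d be a hemimetric on X and let R be a relation between points and subsets of X with x R {x} for all x. Define the distance Rd(x,y) = sup over d-directed sets Z and points z with z R Z of (inf_{w∈Z} d(x,w) − d(y,z))₊. Then d ≤ Rd, Rd(x,y) ≤ Rd(x,w) + d(w,y), and Rd(x,y) ≤ d(x,w) + Rd(w,y) for all x,y,w ∈ X; in particular Rd satisfies the triangle inequality. -/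
open ENNReal NNReal Filter Set

/-- `Z ⊆ X` is `d`-directed: for every finite `F ⊆ Z`,
`⨅ z ∈ Z, ⨆ f ∈ F, d f z = 0` (with `inf ∅ = ∞`, so `Z` is nonempty). -/
def DDirected {X : Type} (d : X → X → ℝ≥0∞) (Z : Set X) : Prop :=
  ∀ F : Finset X, ↑F ⊆ Z → (⨅ z ∈ Z, ⨆ f ∈ F, d f z) = 0

/-- The relational way-below distance: `Rd(x,y)` is the supremum over `d`-directed
sets `Z` and points `z` with `z R Z` of `(⨅ w ∈ Z, d x w) - d y z`. -/
noncomputable def Rd {X : Type} (d : X → X → ℝ≥0∞) (R : X → Set X → Prop)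
    (x y : X) : ℝ≥0∞ :=
  sSup { v | ∃ (Z : Set X) (z : X), DDirected d Z ∧ R z Z ∧
    v = (⨅ w ∈ Z, d x w) - d y z }

section Rd

variable {X : Type} {d : X → X → ℝ≥0∞}

theorem DDirected.singleton {y : X} (hy : d y y = 0) : DDirected d {y} := by
  intro F hF
  simp only [mem_singleton_iff, iInf_iInf_eq_left]
  refine nonpos_iff_eq_zero.mp (iSup₂_le fun f hf => ?_)
  rw [show f = y from hF hf, hy]

theorem biInf_le_add_biInf (htri : ∀ x y z, d x z ≤ d x y + d y z) (Z : Set X) (x w : X) :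
    ⨅ u ∈ Z, d x u ≤ d x w + ⨅ u ∈ Z, d w u := by
  simp only [ENNReal.add_iInf]
  exact le_iInf₂ fun u _ => iInf₂_le_of_le u ‹_› (htri x w u)

variable {R : X → Set X → Prop} {x y : X}

theorem le_Rd {Z : Set X} {z : X} (hZ : DDirected d Z) (hz : R z Z) :
    (⨅ w ∈ Z, d x w) - d y z ≤ Rd d R x y :=
  le_sSup ⟨Z, z, hZ, hz, rfl⟩

theorem Rd_le {c : ℝ≥0∞}
    (h : ∀ Z z, DDirected d Z → R z Z → (⨅ w ∈ Z, d x w) - d y z ≤ c) : Rd d R x y ≤ c :=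
  sSup_le fun _ ⟨Z, z, hZ, hz, hv⟩ => hv ▸ h Z z hZ hz

theorem le_Rd_self (hy : d y y = 0) (hR : R y {y}) : d x y ≤ Rd d R x y := by
  simpa [hy] using le_Rd (x := x) (y := y) (DDirected.singleton hy) hR

theorem Rd_le_Rd_add (htri : ∀ x y z, d x z ≤ d x y + d y z) (w : X) :
    Rd d R x y ≤ Rd d R x w + d w y :=
  Rd_le fun Z z hZ hz =>
    calc (⨅ u ∈ Z, d x u) - d y z
        ≤ ((⨅ u ∈ Z, d x u) - d w z) + (d w z - d y z) := tsub_le_tsub_add_tsub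
      _ ≤ Rd d R x w + d w y := add_le_add (le_Rd hZ hz) (tsub_le_iff_right.mpr (htri w y z))

theorem Rd_le_add_Rd (htri : ∀ x y z, d x z ≤ d x y + d y z) (w : X) :
    Rd d R x y ≤ d x w + Rd d R w y :=
  Rd_le fun Z z hZ hz =>
    calc (⨅ u ∈ Z, d x u) - d y z
        ≤ (d x w + ⨅ u ∈ Z, d w u) - d y z := tsub_le_tsub_right (biInf_le_add_biInf htri Z x w) _
      _ ≤ d x w + ((⨅ u ∈ Z, d w u) - d y z) := add_tsub_le_assoc
      _ ≤ d x w + Rd d R w y := add_le_add le_rfl (le_Rd hZ hz)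

end Rd

/-- For a hemimetric `d` and any relation `R` with `x R {x}` for all `x`,
`d ≤ Rd`, `Rd(x,y) ≤ Rd(x,w) + d(w,y)` and `Rd(x,y) ≤ d(x,w) + Rd(w,y)`;
in particular `Rd` satisfies the triangle inequality. -/
theorem Rd_props {X : Type} (d : X → X → ℝ≥0∞) (R : X → Set X → Prop)
    (href : ∀ x, d x x = 0) (htri : ∀ x y z, d x z ≤ d x y + d y z)
    (hR : ∀ x, R x {x}) :
    (∀ x y, d x y ≤ Rd d R x y) ∧
    (∀ x y w, Rd d R x y ≤ Rd d R x w + d w y) ∧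
    (∀ x y w, Rd d R x y ≤ d x w + Rd d R w y) :=
  ⟨fun _ y => le_Rd_self (href y) (hR y), fun _ _ => Rd_le_Rd_add htri,
    fun _ _ => Rd_le_add_Rd htri⟩
end

section
/- Let d be a distance on X such that X is d-initial, meaning inf_{x∈X} d(x,y) = 0 for all y ∈ X. Then the lower hemimetric of the formal-ball distance equals the formal-ball lift of the lower hemimetric: for all (y,s),(z,t) ∈ X × [0,∞), sup_{(x,r)} (d₊((x,r),(y,s)) − d₊((x,r),(z,t)))₊ = (d̲(z,y) − t + s)₊, where d̲(z,y) = sup_{x∈X} (d(x,y) − d(x,z))₊ and d₊((x,r),(y,s)) = (d(x,y) − r + s)₊. -/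
open ENNReal NNReal Filter Set

/-! Choosing the radius `r = d x z + t` cancels the truncations at `r`, so the supremum over
formal balls is the supremum over `x` of `(d x y + s) - (d x z + t)`. Pointwise this agrees with
`(d x y - d x z + s) - t` unless `d x y < d x z` (or `d x z = ∞`), where the latter drops to
`s - t`; initiality makes `s - t` a lower bound of the supremum, since `⨅ x, d x z = 0`. -/

theorem tsub_tsub_tsub_right_le {α : Type*} [AddCommMonoid α] [PartialOrder α]
    [IsOrderedAddMonoid α] [Sub α] [OrderedSub α] (a b c : α) :
    a - c - (b - c) ≤ a - b :=
  tsub_le_iff_left.mpr (tsub_le_tsub_add_tsub.trans_eq (add_comm _ _))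

namespace ENNReal

theorem iSup_tsub_tsub_radius_eq {X : Type*} (f g : X → ℝ≥0∞) (s t : ℝ≥0∞) :
    ⨆ p : X × ℝ≥0, (f p.1 + s - p.2) - (g p.1 + t - p.2) = ⨆ x, (f x + s) - (g x + t) := by
  refine le_antisymm (iSup_le fun p => ?_) (iSup_le fun x => ?_)
  · exact (tsub_tsub_tsub_right_le _ _ _).trans (le_iSup (fun x => (f x + s) - (g x + t)) p.1)
  · by_cases htop : g x + t = ⊤
    · simp [htop]
    · refine le_iSup_of_le (x, (g x + t).toNNReal) ?_
      simp [coe_toNNReal htop]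

theorem add_tsub_add_le_tsub_add_tsub (a b s t : ℝ≥0∞) : (a + s) - (b + t) ≤ (a - b + s) - t := by
  rw [tsub_add_eq_tsub_tsub]
  gcongr
  exact add_tsub_le_tsub_add

theorem tsub_add_tsub_le_max (a b s t : ℝ≥0∞) :
    (a - b + s) - t ≤ ((a + s) - (b + t)) ⊔ (s - t) := by
  by_cases hab : b ≤ a ∧ b ≠ ⊤
  · rw [ENNReal.sub_add_eq_add_sub hab.1 hab.2, ← tsub_add_eq_tsub_tsub]
    exact le_sup_left
  · have hzero : a - b = 0 := by
      rcases not_and_or.mp hab with hba | hb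
      · exact tsub_eq_zero_of_le (not_le.mp hba).le
      · simp [not_ne_iff.mp hb]
    rw [hzero, zero_add]
    exact le_sup_right

theorem tsub_le_iSup_add_tsub_add {X : Type*} (f g : X → ℝ≥0∞) (s t : ℝ≥0∞)
    (hg : ⨅ x, g x = 0) : s - t ≤ ⨆ x, (f x + s) - (g x + t) :=
  calc s - t = s - ((⨅ x, g x) + t) := by rw [hg, zero_add]
    _ = ⨆ x, s - (g x + t) := by rw [ENNReal.iInf_add, ENNReal.sub_iInf]
    _ ≤ ⨆ x, (f x + s) - (g x + t) := by gcongr; exact le_add_self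

theorem iSup_tsub_add_tsub_eq {X : Type*} (f g : X → ℝ≥0∞) (s t : ℝ≥0∞)
    (hg : ⨅ x, g x = 0) : (⨆ x, f x - g x) + s - t = ⨆ x, (f x + s) - (g x + t) := by
  have : Nonempty X := not_isEmpty_iff.mp fun _ => by simp [iInf_of_empty] at hg
  rw [ENNReal.iSup_add, ENNReal.iSup_sub]
  refine le_antisymm (iSup_le fun x => ?_) (iSup_mono fun x => add_tsub_add_le_tsub_add_tsub _ _ _ _)
  exact (tsub_add_tsub_le_max _ _ _ _).trans
    (sup_le (le_iSup (fun x => (f x + s) - (g x + t)) x) (tsub_le_iSup_add_tsub_add f g s t hg))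

end ENNReal

theorem lower_formalBall_general {X : Type*} (d : X → X → ℝ≥0∞)
    (hinit : ∀ y : X, (⨅ x : X, d x y) = 0) :
    ∀ (y z : X) (s t : ℝ≥0),
      (⨆ p : X × ℝ≥0,
          (((d p.1 y + (s : ℝ≥0∞)) - (p.2 : ℝ≥0∞)) -
            ((d p.1 z + (t : ℝ≥0∞)) - (p.2 : ℝ≥0∞)))) =
        ((⨆ x : X, d x y - d x z) + (s : ℝ≥0∞)) - (t : ℝ≥0∞) := by
  intro y z s t
  rw [ENNReal.iSup_tsub_tsub_radius_eq (d · y) (d · z),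
    ENNReal.iSup_tsub_add_tsub_eq _ _ _ _ (hinit z)]

/-- If `X` is `d`-initial (`⨅ x, d x y = 0` for all `y`), then the lower hemimetric
of the formal-ball distance equals the formal-ball lift of the lower hemimetric:
`sup_{(x,r)} (d₊((x,r),(y,s)) − d₊((x,r),(z,t)))₊ = (d̲(z,y) − t + s)₊`, where
`d̲(z,y) = sup_x (d x y − d x z)₊` and `d₊((x,r),(y,s)) = (d x y − r + s)₊`
(truncated subtraction in `ℝ≥0∞`). -/
theorem lower_formalBall {X : Type*} (d : X → X → ℝ≥0∞)
    (htri : ∀ x y z, d x z ≤ d x y + d y z)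
    (hinit : ∀ y : X, (⨅ x : X, d x y) = 0) :
    ∀ (y z : X) (s t : ℝ≥0),
      (⨆ p : X × ℝ≥0,
          (((d p.1 y + (s : ℝ≥0∞)) - (p.2 : ℝ≥0∞)) -
            ((d p.1 z + (t : ℝ≥0∞)) - (p.2 : ℝ≥0∞)))) =
        ((⨆ x : X, d x y - d x z) + (s : ℝ≥0∞)) - (t : ℝ≥0∞) :=
  lower_formalBall_general d hinit
end

section
/- Let d be a distance on X whose formal-ball lower hemimetric agrees with the lift of the lower hemimetric (i.e., (d₊)̲ = (d̲)₊ on X₊). Define on X₊ the preorder (x,r) ≤ (y,s) iff d(x,y) ≤ r−s, and the strict relation (x,r) < (y,s) iff the upper set of (x,r) is a neighbourhood of (y,s) in the ball topology of (d₊)̲. Then (x,r) < (y,s) if and only if d(x,y) < r − s. -/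
open ENNReal NNReal Filter Set

/-- The formal ball distance `d₊((x,r),(y,s)) = (d x y − r + s)₊`. -/
noncomputable def dPlus {X : Type*} (d : X → X → ℝ≥0∞) (p q : X × ℝ≥0) : ℝ≥0∞ :=
  (d p.1 q.1 + (q.2 : ℝ≥0∞)) - (p.2 : ℝ≥0∞)

/-- The lower hemimetric of the formal ball distance:
`(d₊)̲(q,q') = ⨆ p, (d₊(p,q') − d₊(p,q))₊`. -/
noncomputable def lowDPlus {X : Type*} (d : X → X → ℝ≥0∞) (q q' : X × ℝ≥0) : ℝ≥0∞ :=
  ⨆ p : X × ℝ≥0, dPlus d p q' - dPlus d p q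

/-- The formal ball preorder `(x,r) ≤ (y,s) ↔ d x y ≤ r − s`. -/
def lePlus {X : Type*} (d : X → X → ℝ≥0∞) (p q : X × ℝ≥0) : Prop :=
  d p.1 q.1 + (q.2 : ℝ≥0∞) ≤ (p.2 : ℝ≥0∞)

/-- The strict relation: `p < q` iff the upper set of `p` is a neighbourhood of `q`
in the ball topology of `(d₊)̲`, i.e. it contains a `(d₊)̲`-ball around `q`. -/
def ltPlus {X : Type*} (d : X → X → ℝ≥0∞) (p q : X × ℝ≥0) : Prop :=
  ∃ ε : ℝ≥0∞, 0 < ε ∧ ∀ q', lowDPlus d q q' < ε → lePlus d p q'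

/-
The radius-shift `(y, s) ↦ (y, s + δ)` moves a formal ball by exactly `δ` in `(d̲)₊`, so every
`(d̲)₊`-ball around `(y, s)` contains some `(y, s + δ)` with `δ > 0`; being above `(x, r)` forces
`d x y + s + δ ≤ r`. Conversely, if `d x y + s < r`, the ball of radius `r - (d x y + s)` lies
above `(x, r)`: the supremum defining `d̲` dominates the single term at `x`.
-/

theorem ENNReal.add_lt_of_tsub_lt_tsub {b c s r : ℝ≥0∞} (h : b + s < r)
    (hc : c - s < r - (b + s)) : b + c < r := by
  have hb : b ≠ ∞ := ne_top_of_le_ne_top (ne_top_of_lt h) le_self_add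
  have hs : s ≠ ∞ := ne_top_of_le_ne_top (ne_top_of_lt h) le_add_self
  calc b + c < b + (r - (b + s) + s) :=
        ENNReal.add_lt_add_left hb (le_tsub_add.trans_lt (ENNReal.add_lt_add_right hs hc))
    _ = r := by rw [add_comm _ s, ← add_assoc, add_tsub_cancel_of_le h.le]

theorem le_add_iSup_tsub {X : Type*} (d : X → X → ℝ≥0∞) (x y y' : X) :
    d x y' ≤ d x y + ⨆ z, d z y' - d z y :=
  le_add_tsub.trans (add_le_add_right (le_iSup (fun z => d z y' - d z y) x) _)

theorem lowDPlus_shift_radius {X : Type*} {d : X → X → ℝ≥0∞}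
    (hlow : ∀ q q' : X × ℝ≥0,
      lowDPlus d q q' = ((⨆ x : X, d x q'.1 - d x q.1) + (q'.2 : ℝ≥0∞)) - (q.2 : ℝ≥0∞))
    (y : X) (s δ : ℝ≥0) : lowDPlus d (y, s) (y, s + δ) = δ := by
  simp [hlow, add_comm (s : ℝ≥0∞)]

theorem ltPlus_iff_general {X : Type*} (d : X → X → ℝ≥0∞)
    (hlow : ∀ q q' : X × ℝ≥0,
      lowDPlus d q q' =
        ((⨆ x : X, d x q'.1 - d x q.1) + (q'.2 : ℝ≥0∞)) - (q.2 : ℝ≥0∞)) :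
    ∀ p q : X × ℝ≥0, ltPlus d p q ↔ d p.1 q.1 + (q.2 : ℝ≥0∞) < (p.2 : ℝ≥0∞) := by
  rintro ⟨x, r⟩ ⟨y, s⟩
  constructor
  · rintro ⟨ε, hε, hball⟩
    obtain ⟨δ, hδ, hδε⟩ := ENNReal.lt_iff_exists_nnreal_btwn.mp hε
    have hshift : d x y + s + δ ≤ r := by
      simpa [lePlus, add_assoc] using
        hball (y, s + δ) (lowDPlus_shift_radius hlow y s δ ▸ hδε)
    have hfin : d x y + s ≠ ∞ := ne_top_of_le_ne_top coe_ne_top (le_self_add.trans hshift)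
    exact (ENNReal.lt_add_right hfin (by exact_mod_cast hδ.ne')).trans_le hshift
  · intro h
    refine ⟨r - (d x y + s), tsub_pos_of_lt h, fun ⟨y', s'⟩ hclose => ?_⟩
    rw [hlow] at hclose
    calc d x y' + s' ≤ d x y + ((⨆ z, d z y' - d z y) + s') := by
          rw [← add_assoc]; exact add_le_add_left (le_add_iSup_tsub d x y y') _
      _ ≤ r := (ENNReal.add_lt_of_tsub_lt_tsub h hclose).le

/-- If the lower hemimetric of `d₊` agrees with the lift of the lower hemimetric of
`d`, then `(x,r) < (y,s)` in the formal ball strict order iff `d x y < r − s`. -/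
theorem ltPlus_iff {X : Type*} (d : X → X → ℝ≥0∞)
    (htri : ∀ x y z, d x z ≤ d x y + d y z)
    (hlow : ∀ q q' : X × ℝ≥0,
      lowDPlus d q q' =
        ((⨆ x : X, d x q'.1 - d x q.1) + (q'.2 : ℝ≥0∞)) - (q.2 : ℝ≥0∞)) :
    ∀ p q : X × ℝ≥0, ltPlus d p q ↔ d p.1 q.1 + (q.2 : ℝ≥0∞) < (p.2 : ℝ≥0∞) :=
  ltPlus_iff_general d hlow
end
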